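/- For every i ∈ [−n,n]* and every m ∈ B, the element ρ_i(m) = x_i Y_{−i}[m] + Y_i[X_{−i}(m)] of S₁ lies in the kernel of ∂₁. -/

import Mathlib

open scoped BigOperators

noncomputable section

namespace ToricBorderBasis

abbrev Exp (n : ℕ) := Fin n → ℤ

abbrev LaurentS (n : ℕ) (k : Type*) [Field k] : Type _ := AddMonoidAlgebra k (Exp n)

variable {k : Type*} [Field k] {n : ℕ}

def edeg {n : ℕ} (α : Exp n) : ℕ := ∑ i, (α i).natAbs

def mono (k : Type*) [Field k] {n : ℕ} (α : Exp n) : LaurentS n k :=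
  AddMonoidAlgebra.ofCoeff (Finsupp.single α 1)

def pdeg (p : LaurentS n k) : ℕ := (AddMonoidAlgebra.coeff p : Exp n →₀ k).support.sup edeg

def expOf (n : ℕ) (i : Fin n) (s : Bool) : Exp n :=
  Pi.single i (if s then 1 else -1)

def varX (k : Type*) [Field k] {n : ℕ} (i : Fin n) (s : Bool) : LaurentS n k :=
  mono k (expOf n i s)

def Bx {n : ℕ} (B : Set (Exp n)) : Set (Exp n) :=
  B ∪ {β | ∃ i s, ∃ α ∈ B, β = expOf n i s + α}

def bord {n : ℕ} (B : Set (Exp n)) : Set (Exp n) := Bx B \ B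

def ConnectedToOne {n : ℕ} (B : Set (Exp n)) : Prop :=
  (0 : Exp n) ∈ B ∧ ∀ α ∈ B, α ≠ 0 →
    ∃ i s, ∃ α' ∈ B, α = expOf n i s + α' ∧ edeg α' < edeg α

def spanMon (k : Type*) [Field k] {n : ℕ} (A : Set (Exp n)) :
    Submodule k (LaurentS n k) :=
  Submodule.span k {p | ∃ α ∈ A, p = mono k α}

def Xop (π : LaurentS n k →ₗ[k] LaurentS n k) (i : Fin n) (s : Bool) :
    LaurentS n k →ₗ[k] LaurentS n k :=
  π ∘ₗ LinearMap.mulLeft k (varX k i s)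

/-- `π` is a projection from `⟨B^×⟩` onto `⟨B⟩`. -/
def IsProj (π : LaurentS n k →ₗ[k] LaurentS n k) (B : Set (Exp n)) : Prop :=
  (∀ p ∈ spanMon k (Bx B), π p ∈ spanMon k B) ∧ (∀ p ∈ spanMon k B, π p = p)

/-- The operators `X_i`, `i ∈ [−n,n]*`, pairwise commute on `⟨B⟩`. -/
def CommRelAll (π : LaurentS n k →ₗ[k] LaurentS n k) (B : Set (Exp n)) : Prop :=
  ∀ (i : Fin n) (s : Bool) (j : Fin n) (t : Bool), ∀ b ∈ spanMon k B,
    Xop π i s (Xop π j t b) = Xop π j t (Xop π i s b)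

/-- `X_i ∘ X_{−i} = Id` on `⟨B⟩` for every `i ∈ [−n,n]*`. -/
def InvRelAll (π : LaurentS n k →ₗ[k] LaurentS n k) (B : Set (Exp n)) : Prop :=
  ∀ (i : Fin n) (s : Bool), ∀ b ∈ spanMon k B, Xop π i s (Xop π i (!s) b) = b

/-- The rewriting family `F = {x^β − π(x^β) : x^β ∈ ∂B}`. -/
def rewFamAll (π : LaurentS n k →ₗ[k] LaurentS n k) (B : Set (Exp n)) :
    Set (LaurentS n k) :=
  {f | ∃ β ∈ bord B, f = mono k β - π (mono k β)}

/-- Indices of the basis `Y_i[m]` of the free module `S₁`: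
pairs of a signed index `(i,s)` and `m ∈ B` with `x_i m ∉ B`. -/
def GoodIdx (n : ℕ) (B : Set (Exp n)) : Type :=
  {q : (Fin n × Bool) × Exp n // q.2 ∈ B ∧ expOf n q.1.1 q.1.2 + q.2 ∉ B}

/-- The free `S`-module `S₁` with basis the `Y_i[m]`, `m ∈ B`, `x_i m ∉ B`. -/
abbrev S1 (n : ℕ) (k : Type*) [Field k] (B : Set (Exp n)) : Type _ :=
  GoodIdx n B →₀ LaurentS n k

open Classical in
/-- The basis element `Y_i[m]`, with the convention `Y_i[m] = 0` if `x_i m ∈ B`. -/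
def Ysym (k : Type*) [Field k] {n : ℕ} (B : Set (Exp n)) (i : Fin n) (s : Bool)
    (m : Exp n) : S1 n k B :=
  if h : m ∈ B ∧ expOf n i s + m ∉ B then Finsupp.single ⟨((i, s), m), h⟩ 1 else 0

/-- `k`-linear extension `b ↦ Y_i[b]` for `b ∈ ⟨B⟩`. -/
def YsymL (k : Type*) [Field k] {n : ℕ} (B : Set (Exp n)) (i : Fin n) (s : Bool)
    (b : LaurentS n k) : S1 n k B :=
  (AddMonoidAlgebra.coeff b : Exp n →₀ k).sum fun m c => c • Ysym k B i s m

/-- `ψ_i(m) = x_i m − π(x_i m)` for a monomial `m`. -/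
def psiMono (π : LaurentS n k →ₗ[k] LaurentS n k) (i : Fin n) (s : Bool)
    (m : Exp n) : LaurentS n k :=
  mono k (expOf n i s + m) - π (mono k (expOf n i s + m))

/-- The `S`-module map `∂₁ : S₁ → S`, `Y_i[m] ↦ ψ_i(m)`. -/
def partial1 (π : LaurentS n k →ₗ[k] LaurentS n k) (B : Set (Exp n)) :
    S1 n k B →ₗ[LaurentS n k] LaurentS n k :=
  Finsupp.lsum (LaurentS n k) fun q =>
    LinearMap.toSpanSingleton (LaurentS n k) (LaurentS n k)
      (psiMono π q.1.1.1 q.1.1.2 q.1.2)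

/-- `φ_{i,j}(m) = x_i Y_j[m] − x_j Y_i[m] − Y_j[X_i(m)] + Y_i[X_j(m)]`. -/
def phiEl (π : LaurentS n k →ₗ[k] LaurentS n k) (B : Set (Exp n))
    (i : Fin n) (s : Bool) (j : Fin n) (t : Bool) (m : Exp n) : S1 n k B :=
  varX k i s • Ysym k B j t m - varX k j t • Ysym k B i s m
    - YsymL k B j t (Xop π i s (mono k m)) + YsymL k B i s (Xop π j t (mono k m))

/-- `ρ_i(m) = x_i Y_{−i}[m] + Y_i[X_{−i}(m)]`. -/
def rhoEl (π : LaurentS n k →ₗ[k] LaurentS n k) (B : Set (Exp n))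
    (i : Fin n) (s : Bool) (m : Exp n) : S1 n k B :=
  varX k i s • Ysym k B i (!s) m + YsymL k B i s (Xop π i (!s) (mono k m))

/-- The `S`-submodule `K₁ ⊆ S₁` generated by the `ρ_i(m)` and `φ_{i,j}(m)`, `m ∈ B`. -/
def K1 (π : LaurentS n k →ₗ[k] LaurentS n k) (B : Set (Exp n)) :
    Submodule (LaurentS n k) (S1 n k B) :=
  Submodule.span (LaurentS n k)
    ({u | ∃ i s m, m ∈ B ∧ u = rhoEl π B i s m} ∪
     {u | ∃ i s j t m, ((i, s) : Fin n × Bool) ≠ (j, t) ∧ m ∈ B ∧ u = phiEl π B i s j t m})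

/-- `X_{i₁} ∘ ⋯ ∘ X_{i_k}` for a sequence of signed indices. -/
def Xcomp (π : LaurentS n k →ₗ[k] LaurentS n k) :
    List (Fin n × Bool) → LaurentS n k →ₗ[k] LaurentS n k
  | [] => LinearMap.id
  | q :: L => (Xop π q.1 q.2) ∘ₗ Xcomp π L

/-- `Ψ_{i₁,…,i_k} = Σ_{l=1}^{k} x_{i₁}⋯x_{i_{l−1}} Y_{i_l}[X_{i_{l+1}} ∘ ⋯ ∘ X_{i_k}(1)]`. -/
def Psi (π : LaurentS n k →ₗ[k] LaurentS n k) (B : Set (Exp n)) :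
    List (Fin n × Bool) → S1 n k B
  | [] => 0
  | q :: L => YsymL k B q.1 q.2 (Xcomp π L 1) + varX k q.1 q.2 • Psi π B L

/-- Degree on `S₁`: max over the nonzero terms `m₁ Y_i[m₂]` of `δ(m₁)`
(`⊥` for the zero element). -/
def s1deg {B : Set (Exp n)} (u : S1 n k B) : WithBot ℕ :=
  u.support.sup fun q => (pdeg (u q) : WithBot ℕ)

end ToricBorderBasis

namespace ToricBorderBasis

section Lemmas

variable {k : Type*} [Field k] {n : ℕ}

lemma mono_add (α β : Exp n) : mono k (α + β) = mono k α * mono k β := by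
  simp [mono, AddMonoidAlgebra.single_mul_single]

lemma mono_zero : mono k (0 : Exp n) = 1 := rfl

lemma mono_mem_spanMon {A : Set (Exp n)} {α : Exp n} (h : α ∈ A) :
    mono k α ∈ spanMon k A :=
  Submodule.subset_span ⟨α, h, rfl⟩

lemma expOf_add_expOf_not (i : Fin n) (s : Bool) :
    expOf n i s + expOf n i (!s) = 0 := by
  cases s <;> simp [expOf, ← Pi.single_add]

lemma varX_mul_varX_not (i : Fin n) (s : Bool) : varX k i s * varX k i (!s) = 1 := by
  rw [varX, varX, ← mono_add, expOf_add_expOf_not, mono_zero]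

lemma Xop_apply (π : LaurentS n k →ₗ[k] LaurentS n k) (i : Fin n) (s : Bool)
    (p : LaurentS n k) : Xop π i s p = π (varX k i s * p) := rfl

lemma Xop_mono_mem_spanMon {π : LaurentS n k →ₗ[k] LaurentS n k} {B : Set (Exp n)}
    (hπ : ∀ p ∈ spanMon k (Bx B), π p ∈ spanMon k B) (i : Fin n) (s : Bool)
    {m : Exp n} (hm : m ∈ B) : Xop π i s (mono k m) ∈ spanMon k B := by
  rw [Xop_apply, varX, ← mono_add]
  exact hπ _ (mono_mem_spanMon (Or.inr ⟨i, s, m, hm, rfl⟩))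

lemma YsymL_mono (B : Set (Exp n)) (i : Fin n) (s : Bool) (α : Exp n) :
    YsymL k B i s (mono k α) = Ysym k B i s α := by
  simp [YsymL, mono]

lemma YsymL_add (B : Set (Exp n)) (i : Fin n) (s : Bool) (p q : LaurentS n k) :
    YsymL k B i s (p + q) = YsymL k B i s p + YsymL k B i s q :=
  Finsupp.sum_add_index' (by simp) fun _ _ _ => add_smul _ _ _

lemma YsymL_smul (B : Set (Exp n)) (i : Fin n) (s : Bool) (c : k) (p : LaurentS n k) :
    YsymL k B i s (c • p) = c • YsymL k B i s p := by
  rw [YsymL, YsymL, AddMonoidAlgebra.coeff_smul, Finsupp.sum_smul_index (by simp),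
    Finsupp.smul_sum]
  exact Finsupp.sum_congr fun _ _ => mul_smul _ _ _

lemma partial1_single (π : LaurentS n k →ₗ[k] LaurentS n k) (B : Set (Exp n))
    (q : GoodIdx n B) (c : LaurentS n k) :
    partial1 π B (Finsupp.single q c) = c * psiMono π q.1.1.1 q.1.1.2 q.1.2 := by
  simp [partial1, Finsupp.lsum_single, LinearMap.toSpanSingleton_apply]

section FixedOnSpan

variable (π : LaurentS n k →ₗ[k] LaurentS n k) {B : Set (Exp n)}
  (hπ : ∀ p ∈ spanMon k B, π p = p)
include hπ

lemma partial1_Ysym (i : Fin n) (s : Bool) {m : Exp n} (hm : m ∈ B) :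
    partial1 π B (Ysym k B i s m) = varX k i s * mono k m - π (varX k i s * mono k m) := by
  rw [varX, ← mono_add]
  unfold Ysym
  split_ifs with h
  · exact (partial1_single π B _ 1).trans (one_mul _)
  · have hin : expOf n i s + m ∈ B := of_not_not fun hc => h ⟨hm, hc⟩
    rw [map_zero, hπ _ (mono_mem_spanMon hin), sub_self]

lemma partial1_YsymL (i : Fin n) (s : Bool) {p : LaurentS n k} (hp : p ∈ spanMon k B) :
    partial1 π B (YsymL k B i s p) = varX k i s * p - π (varX k i s * p) := by
  induction hp using Submodule.span_induction with
  | mem x hx =>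
    obtain ⟨α, hα, rfl⟩ := hx
    rw [YsymL_mono, partial1_Ysym π hπ i s hα]
  | zero => simp [YsymL]
  | add x y _ _ hx hy =>
    rw [YsymL_add, map_add, hx, hy, mul_add, map_add]
    abel
  | smul c x _ hx =>
    rw [YsymL_smul, LinearMap.map_smul_of_tower, hx, mul_smul_comm, map_smul, smul_sub]

end FixedOnSpan

end Lemmas

theorem statement_13_general {n : ℕ} {k : Type*} [Field k]
    (B : Set (Exp n))
    (π : LaurentS n k →ₗ[k] LaurentS n k) (hπ : IsProj π B)
    (hinv : InvRelAll π B) :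
    ∀ (i : Fin n) (s : Bool), ∀ m ∈ B,
      partial1 π B (rhoEl π B i s m) = 0 := by
  intro i s m hm
  -- `∂₁ ρ_i(m) = x_i (x_{-i} m - X_{-i} m) + (x_i X_{-i} m - X_i X_{-i} m) = m - m`
  have hXm := Xop_mono_mem_spanMon hπ.1 i (!s) hm
  have hXX : π (varX k i s * Xop π i (!s) (mono k m)) = mono k m :=
    hinv i s _ (mono_mem_spanMon hm)
  rw [rhoEl, map_add, map_smul, partial1_Ysym π hπ.2 i (!s) hm,
    partial1_YsymL π hπ.2 i s hXm, hXX, smul_eq_mul, mul_sub, ← mul_assoc,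
    varX_mul_varX_not, one_mul, Xop_apply]
  abel

/-- For every `i ∈ [−n,n]*` and `m ∈ B`, the element
`ρ_i(m) = x_i Y_{−i}[m] + Y_i[X_{−i}(m)]` lies in `ker ∂₁`. -/
theorem statement_13 {n : ℕ} {k : Type*} [Field k]
    (B : Set (Exp n)) (hBfin : B.Finite) (hB1 : ConnectedToOne B)
    (π : LaurentS n k →ₗ[k] LaurentS n k) (hπ : IsProj π B)
    (hcomm : CommRelAll π B) (hinv : InvRelAll π B) :
    ∀ (i : Fin n) (s : Bool), ∀ m ∈ B,
      partial1 π B (rhoEl π B i s m) = 0 :=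
  statement_13_general B π hπ hinv

end ToricBorderBasis
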